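/- arXiv:2512.10008 — 2 statements merged into one kernel-verified Lean document; each statement's English description precedes it below -/
import Mathlib

section
/- Let M > 0, Λ > 0, Q ∈ ℝ and define f(r) = 1 - 2M/r + Q²/r² - Λr²/3. If f has a triple root at some r₀ > 0 (i.e. f(r₀) = f'(r₀) = f''(r₀) = 0), then r₀ = 1/√(2Λ), Λ M² = 2/9, and Q² = (9/8)M², i.e. |Q| = 3M/(2√2) ≈ 1.06·M. -/
/-!
Multiplying `f = 0`, `f' = 0`, `f'' = 0` at `r ≠ 0` by `r²`, `r³/2`, `r⁴/2` gives three equations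
linear in `Mr`, `Q²` and `Λr⁴`. Eliminating yields `3Mr = 4Q²` and then `r = 3M/2`, after which
`Q² = 9M²/8` and `Λr² = 1/2`.
-/

namespace RNdS

noncomputable section

def metric (M Q Λ r : ℝ) : ℝ := 1 - 2 * M / r + Q ^ 2 / r ^ 2 - Λ * r ^ 2 / 3

def metricDeriv (M Q Λ r : ℝ) : ℝ := 2 * M / r ^ 2 - 2 * Q ^ 2 / r ^ 3 - 2 * Λ * r / 3

def metricDeriv2 (M Q Λ r : ℝ) : ℝ := -4 * M / r ^ 3 + 6 * Q ^ 2 / r ^ 4 - 2 * Λ / 3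

variable {M Q Λ r : ℝ}

theorem hasDerivAt_metric (hr : r ≠ 0) :
    HasDerivAt (metric M Q Λ) (metricDeriv M Q Λ r) r := by
  have key : HasDerivAt (fun x => 1 - 2 * M * x⁻¹ + Q ^ 2 * (x ^ 2)⁻¹ - Λ * x ^ 2 / 3) _ r :=
    ((((hasDerivAt_inv hr).const_mul (2 * M)).const_sub 1).add
      (((hasDerivAt_pow 2 r).inv (pow_ne_zero 2 hr)).const_mul (Q ^ 2))).sub
      (((hasDerivAt_pow 2 r).const_mul Λ).div_const 3)
  exact key.congr_deriv (by unfold metricDeriv; field_simp; ring)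

theorem hasDerivAt_metricDeriv (hr : r ≠ 0) :
    HasDerivAt (metricDeriv M Q Λ) (metricDeriv2 M Q Λ r) r := by
  have key : HasDerivAt (fun x => 2 * M * (x ^ 2)⁻¹ - 2 * Q ^ 2 * (x ^ 3)⁻¹ - 2 * Λ * x / 3) _ r :=
    ((((hasDerivAt_pow 2 r).inv (pow_ne_zero 2 hr)).const_mul (2 * M)).sub
      (((hasDerivAt_pow 3 r).inv (pow_ne_zero 3 hr)).const_mul (2 * Q ^ 2))).sub
      (((hasDerivAt_id' r).const_mul (2 * Λ)).div_const 3)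
  exact key.congr_deriv (by unfold metricDeriv2; field_simp; ring)

theorem deriv_metric (hr : r ≠ 0) : deriv (metric M Q Λ) r = metricDeriv M Q Λ r :=
  (hasDerivAt_metric hr).deriv

theorem deriv_deriv_metric (hr : r ≠ 0) :
    deriv (deriv (metric M Q Λ)) r = metricDeriv2 M Q Λ r := by
  have hloc : deriv (metric M Q Λ) =ᶠ[nhds r] metricDeriv M Q Λ := by
    filter_upwards [eventually_ne_nhds hr] with x hx using deriv_metric hx
  rw [hloc.deriv_eq, (hasDerivAt_metricDeriv hr).deriv]

theorem eq_of_metric_triple_root (hr : r ≠ 0) (h0 : metric M Q Λ r = 0)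
    (h1 : metricDeriv M Q Λ r = 0) (h2 : metricDeriv2 M Q Λ r = 0) :
    r = 3 * M / 2 ∧ Q ^ 2 = 9 / 8 * M ^ 2 ∧ Λ * r ^ 2 = 1 / 2 := by
  have e0 : r ^ 2 - 2 * M * r + Q ^ 2 - Λ * r ^ 4 / 3 = 0 := by
    calc _ = r ^ 2 * metric M Q Λ r := by unfold metric; field_simp
      _ = 0 := by rw [h0, mul_zero]
  have e1 : M * r - Q ^ 2 - Λ * r ^ 4 / 3 = 0 := by
    calc _ = r ^ 3 / 2 * metricDeriv M Q Λ r := by unfold metricDeriv; field_simp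
      _ = 0 := by rw [h1, mul_zero]
  have e2 : -2 * M * r + 3 * Q ^ 2 - Λ * r ^ 4 / 3 = 0 := by
    calc _ = r ^ 4 / 2 * metricDeriv2 M Q Λ r := by unfold metricDeriv2; field_simp; ring
      _ = 0 := by rw [h2, mul_zero]
  have hMQ : 3 * M * r = 4 * Q ^ 2 := by linarith
  have hr' : r = 3 * M / 2 :=
    mul_left_cancel₀ hr (by linear_combination e0 - e1 + hMQ / 2)
  subst hr'
  have hQ : Q ^ 2 = 9 / 8 * M ^ 2 := by linear_combination -hMQ / 4
  refine ⟨rfl, hQ, mul_left_cancel₀ (pow_ne_zero 2 hr) ?_⟩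
  linear_combination (-3) * e1 - 3 * hQ

end

end RNdS

theorem eq_one_div_sqrt_of_mul_sq_eq_one {a r : ℝ} (hr : 0 < r) (h : a * r ^ 2 = 1) :
    r = 1 / Real.sqrt a := by
  refine eq_one_div_of_mul_eq_one_left ?_
  rw [← Real.sqrt_sq hr.le, ← Real.sqrt_mul (sq_nonneg r), mul_comm, h, Real.sqrt_one]

theorem stmt_8_general (M Λ Q r₀ : ℝ)
    (f : ℝ → ℝ) (hf : ∀ r : ℝ, f r = 1 - 2*M/r + Q^2/r^2 - Λ*r^2/3)
    (hr₀ : 0 < r₀)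
    (h0 : f r₀ = 0) (h1 : deriv f r₀ = 0) (h2 : deriv (deriv f) r₀ = 0) :
    r₀ = 1 / Real.sqrt (2*Λ) ∧ Λ * M^2 = 2/9 ∧ Q^2 = 9/8 * M^2 := by
  obtain rfl : f = RNdS.metric M Q Λ := funext hf
  rw [RNdS.deriv_metric hr₀.ne'] at h1
  rw [RNdS.deriv_deriv_metric hr₀.ne'] at h2
  obtain ⟨hr, hQ, hΛ⟩ := RNdS.eq_of_metric_triple_root hr₀.ne' h0 h1 h2
  refine ⟨eq_one_div_sqrt_of_mul_sq_eq_one hr₀ (by linear_combination 2 * hΛ), ?_, hQ⟩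
  subst hr
  linear_combination 4 / 9 * hΛ

theorem stmt_8 (M Λ Q r₀ : ℝ) (hM : 0 < M) (hΛ : 0 < Λ)
    (f : ℝ → ℝ) (hf : ∀ r : ℝ, f r = 1 - 2*M/r + Q^2/r^2 - Λ*r^2/3)
    (hr₀ : 0 < r₀)
    (h0 : f r₀ = 0) (h1 : deriv f r₀ = 0) (h2 : deriv (deriv f) r₀ = 0) :
    r₀ = 1 / Real.sqrt (2*Λ) ∧ Λ * M^2 = 2/9 ∧ Q^2 = 9/8 * M^2 :=
  stmt_8_general M Λ Q r₀ f hf hr₀ h0 h1 h2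
end

section
/- Let φ : [0,1] → ℂ be continuous and let ξ solve ξ'' = -ξ|φ|² on [0,1] with ξ(1) = 1, ξ'(1) = 0, and suppose ξ > 0 on [0,1]. Then for all V ∈ [0,1]: ξ'(V) = ∫_V¹ ξ(s)|φ(s)|² ds ≤ ∫_V¹ |φ(s)|² ds, and ξ(V) ≥ 1 - ∫_V¹ (s - V)|φ(s)|² ds. In particular, if ∫₀¹ s|φ(s)|² ds < 1 then ξ(V) > 0 automatically holds for all V ∈ [0,1]. -/
open Set MeasureTheory intervalIntegral

private lemma stmt_19_aux (ξ f : ℝ → ℝ) (hf : Continuous f) (hfpos : ∀ s, 0 ≤ f s)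
    (hξ : ContDiff ℝ 2 ξ)
    (hode : ∀ V ∈ Icc (0:ℝ) 1, deriv (deriv ξ) V = -ξ V * f V)
    (hξ1 : ξ 1 = 1) (hξ'1 : deriv ξ 1 = 0)
    (a : ℝ) (ha : a ∈ Icc (0:ℝ) 1) (hpos : ∀ s ∈ Icc a 1, 0 ≤ ξ s) :
    ∀ V ∈ Icc a 1,
      deriv ξ V = (∫ s in V..1, ξ s * f s) ∧
      deriv ξ V ≤ (∫ s in V..1, f s) ∧
      1 - (∫ s in V..1, (s - V) * f s) ≤ ξ V := by
  obtain ⟨hd1, hd2⟩ := contDiff_succ_iff_deriv.mp (show ContDiff ℝ (1+1) ξ by norm_num [hξ])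
  obtain ⟨hd21, hd22⟩ := contDiff_one_iff_deriv.mp hd2.2
  have hξc : Continuous ξ := hd1.continuous
  have hIcc : Icc a 1 ⊆ Icc (0:ℝ) 1 := Icc_subset_Icc ha.1 le_rfl
  -- FTC for deriv ξ
  have hFTC : ∀ V ∈ Icc (0:ℝ) 1, deriv ξ V = ∫ s in V..1, ξ s * f s := by
    intro V hV
    have h1 : (∫ s in V..1, deriv (deriv ξ) s) = deriv ξ 1 - deriv ξ V :=
      intervalIntegral.integral_deriv_eq_sub (fun x _ => hd21 x)
        (hd22.intervalIntegrable _ _)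
    have h2 : (∫ s in V..1, deriv (deriv ξ) s) = ∫ s in V..1, -ξ s * f s := by
      apply intervalIntegral.integral_congr
      intro s hs
      rw [uIcc_of_le hV.2] at hs
      exact hode s ⟨hV.1.trans hs.1, hs.2⟩
    have h3 : (∫ s in V..1, -ξ s * f s) = -∫ s in V..1, ξ s * f s := by
      simp [neg_mul, intervalIntegral.integral_neg]
    rw [hξ'1, h2, h3] at h1
    linarith
  have hd'nonneg : ∀ V ∈ Icc a 1, 0 ≤ deriv ξ V := by
    intro V hV
    rw [hFTC V (hIcc hV)]
    apply intervalIntegral.integral_nonneg hV.2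
    intro s hs
    exact mul_nonneg (hpos s ⟨hV.1.trans hs.1, hs.2⟩) (hfpos s)
  have hmono : MonotoneOn ξ (Icc a 1) := by
    apply monotoneOn_of_deriv_nonneg (convex_Icc a 1) hξc.continuousOn
      hd1.differentiableOn
    intro x hx
    rw [interior_Icc] at hx
    exact hd'nonneg x (Ioo_subset_Icc_self hx)
  have hle1 : ∀ s ∈ Icc a 1, ξ s ≤ 1 := by
    intro s hs
    have := hmono hs (right_mem_Icc.mpr ha.2) hs.2
    rwa [hξ1] at this
  have hle2 : ∀ V ∈ Icc a 1, deriv ξ V ≤ ∫ s in V..1, f s := by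
    intro V hV
    rw [hFTC V (hIcc hV)]
    apply intervalIntegral.integral_mono_on hV.2
      ((hξc.mul hf).intervalIntegrable _ _) (hf.intervalIntegrable _ _)
    intro s hs
    exact mul_le_of_le_one_left (hfpos s) (hle1 s ⟨hV.1.trans hs.1, hs.2⟩)
  intro V hV
  refine ⟨hFTC V (hIcc hV), hle2 V hV, ?_⟩
  -- third inequality via antitone auxiliary function
  set G : ℝ → ℝ := fun u => ξ u - 1 + ((∫ s in u..1, s * f s) - u * ∫ s in u..1, f s)
    with hG
  have hGderiv : ∀ x, HasDerivAt G (deriv ξ x - ∫ s in x..1, f s) x := by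
    intro x
    have hc1 : Continuous fun s : ℝ => s * f s := continuous_id.mul hf
    have h1 : HasDerivAt (fun u => ∫ s in u..1, s * f s) (-(x * f x)) x :=
      intervalIntegral.integral_hasDerivAt_left (hc1.intervalIntegrable _ _)
        (hc1.stronglyMeasurableAtFilter _ _) hc1.continuousAt
    have h2 : HasDerivAt (fun u => ∫ s in u..1, f s) (-f x) x :=
      intervalIntegral.integral_hasDerivAt_left (hf.intervalIntegrable _ _)
        (hf.stronglyMeasurableAtFilter _ _) hf.continuousAt
    have h3 : HasDerivAt (fun u => u * ∫ s in u..1, f s)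
        ((1 : ℝ) * (∫ s in x..1, f s) + x * (-f x)) x := (hasDerivAt_id x).mul h2
    have h4 : HasDerivAt ξ (deriv ξ x) x := (hd1 x).hasDerivAt
    have := (h4.sub_const 1).add (h1.sub h3)
    exact this.congr_deriv (by ring)
  have hGdiff : Differentiable ℝ G := fun x => (hGderiv x).differentiableAt
  have hGanti : AntitoneOn G (Icc a 1) := by
    apply antitoneOn_of_deriv_nonpos (convex_Icc a 1) hGdiff.continuous.continuousOn
      hGdiff.differentiableOn
    intro x hx
    rw [interior_Icc] at hx
    rw [(hGderiv x).deriv]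
    have := hle2 x (Ioo_subset_Icc_self hx)
    linarith
  have hG1 : G 1 = 0 := by simp [hG, hξ1]
  have hGV : 0 ≤ G V := by
    have := hGanti hV (right_mem_Icc.mpr ha.2) hV.2
    rwa [hG1] at this
  have hsplit : (∫ s in V..1, (s - V) * f s)
      = (∫ s in V..1, s * f s) - V * ∫ s in V..1, f s := by
    have hsf : Continuous fun s : ℝ => s * f s := continuous_id.mul hf
    have hVf : Continuous fun s : ℝ => V * f s := continuous_const.mul hf
    have e1 : (∫ s in V..1, (s - V) * f s) = ∫ s in V..1, (s * f s - V * f s) := by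
      apply intervalIntegral.integral_congr
      intro s _
      ring
    rw [e1, intervalIntegral.integral_sub (hsf.intervalIntegrable _ _)
      (hVf.intervalIntegrable _ _), intervalIntegral.integral_const_mul]
  rw [hsplit]
  simp only [hG] at hGV
  linarith

theorem stmt_19 (φ : ℝ → ℂ) (ξ : ℝ → ℝ)
    (hφ : ContinuousOn φ (Icc 0 1))
    (hξ : ContDiff ℝ 2 ξ)
    (hode : ∀ V ∈ Icc (0:ℝ) 1, deriv (deriv ξ) V = -ξ V * ‖φ V‖ ^ 2)
    (hξ1 : ξ 1 = 1) (hξ'1 : deriv ξ 1 = 0) :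
    ((∀ V ∈ Icc (0:ℝ) 1, 0 < ξ V) →
      ∀ V ∈ Icc (0:ℝ) 1,
        deriv ξ V = (∫ s in V..1, ξ s * ‖φ s‖ ^ 2) ∧
        deriv ξ V ≤ (∫ s in V..1, ‖φ s‖ ^ 2) ∧
        1 - (∫ s in V..1, (s - V) * ‖φ s‖ ^ 2) ≤ ξ V) ∧
    ((∫ s in (0:ℝ)..1, s * ‖φ s‖ ^ 2) < 1 → ∀ V ∈ Icc (0:ℝ) 1, 0 < ξ V) := by
  set f : ℝ → ℝ := fun s => ‖φ (max 0 (min 1 s))‖ ^ 2 with hfdef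
  have hclamp : Continuous fun s : ℝ => max 0 (min 1 s) :=
    continuous_const.max (continuous_const.min continuous_id)
  have hmaps : ∀ s : ℝ, max 0 (min 1 s) ∈ Icc (0:ℝ) 1 :=
    fun s => ⟨le_max_left _ _, max_le zero_le_one (min_le_left _ _)⟩
  have hf : Continuous f := ((hφ.comp_continuous hclamp hmaps).norm.pow 2)
  have hfeq : ∀ s ∈ Icc (0:ℝ) 1, f s = ‖φ s‖ ^ 2 := by
    intro s hs
    have h : max 0 (min 1 s) = s := by rw [min_eq_right hs.2, max_eq_right hs.1]
    simp [hfdef, h]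
  have hfpos : ∀ s, 0 ≤ f s := fun s => by positivity
  have hode' : ∀ V ∈ Icc (0:ℝ) 1, deriv (deriv ξ) V = -ξ V * f V := by
    intro V hV; rw [hfeq V hV]; exact hode V hV
  have hcongr : ∀ (g : ℝ → ℝ → ℝ) (V : ℝ), V ∈ Icc (0:ℝ) 1 →
      (∫ s in V..1, g V s * f s) = ∫ s in V..1, g V s * ‖φ s‖ ^ 2 := by
    intro g V hV
    apply intervalIntegral.integral_congr
    intro s hs
    rw [uIcc_of_le hV.2] at hs
    show g V s * f s = g V s * ‖φ s‖ ^ 2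
    rw [hfeq s ⟨hV.1.trans hs.1, hs.2⟩]
  have hcongr1 : ∀ V ∈ Icc (0:ℝ) 1, (∫ s in V..1, f s) = ∫ s in V..1, ‖φ s‖ ^ 2 := by
    intro V hV
    apply intervalIntegral.integral_congr
    intro s hs
    rw [uIcc_of_le hV.2] at hs
    exact hfeq s ⟨hV.1.trans hs.1, hs.2⟩
  have h0 : (∫ s in (0:ℝ)..1, s * f s) = ∫ s in (0:ℝ)..1, s * ‖φ s‖ ^ 2 :=
    hcongr (fun _ s => s) 0 ⟨le_rfl, zero_le_one⟩
  constructor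
  · intro hpos V hV
    obtain ⟨A, B, C⟩ := stmt_19_aux ξ f hf hfpos hξ hode' hξ1 hξ'1 0
      ⟨le_rfl, zero_le_one⟩ (fun s hs => (hpos s hs).le) V hV
    refine ⟨?_, ?_, ?_⟩
    · rw [A, hcongr (fun _ s => ξ s) V hV]
    · rw [← hcongr1 V hV]
      exact B
    · rw [← hcongr (fun V s => s - V) V hV]
      exact C
  · intro hsmall
    have hξc : Continuous ξ := hξ.continuous
    have hsmall' : (∫ s in (0:ℝ)..1, s * f s) < 1 := by rw [h0]; exact hsmall
    by_contra h
    push_neg at h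
    obtain ⟨V₁, hV₁, hV₁le⟩ := h
    set Z := Icc (0:ℝ) 1 ∩ ξ ⁻¹' Iic 0 with hZ
    have hZne : Z.Nonempty := ⟨V₁, hV₁, hV₁le⟩
    have hZcomp : IsCompact Z := isCompact_Icc.inter_right (isClosed_Iic.preimage hξc)
    set V₀ := sSup Z with hV₀def
    have hV₀Z : V₀ ∈ Z := hZcomp.sSup_mem hZne
    have hV₀01 : V₀ ∈ Icc (0:ℝ) 1 := hV₀Z.1
    have hV₀le : ξ V₀ ≤ 0 := hV₀Z.2
    have hV₀lt1 : V₀ < 1 := by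
      rcases lt_or_eq_of_le hV₀01.2 with h | h
      · exact h
      · rw [h, hξ1] at hV₀le; linarith
    have key : ∀ c ∈ Ioc V₀ 1, 1 - (∫ s in (0:ℝ)..1, s * f s) ≤ ξ c := by
      intro c hc
      have hc0 : (0:ℝ) ≤ c := hV₀01.1.trans hc.1.le
      have hc01 : c ∈ Icc (0:ℝ) 1 := ⟨hc0, hc.2⟩
      have hξnn : ∀ s ∈ Icc c 1, 0 ≤ ξ s := by
        intro s hs
        by_contra hneg
        push_neg at hneg
        have hsZ : s ∈ Z := ⟨⟨hc0.trans hs.1, hs.2⟩, hneg.le⟩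
        have hle : s ≤ V₀ := le_csSup hZcomp.bddAbove hsZ
        have := hc.1
        have := hs.1
        linarith
      obtain ⟨_, _, C⟩ := stmt_19_aux ξ f hf hfpos hξ hode' hξ1 hξ'1 c hc01 hξnn c
        ⟨le_rfl, hc.2⟩
      have h1 : (∫ s in c..1, (s - c) * f s) ≤ ∫ s in c..1, s * f s := by
        apply intervalIntegral.integral_mono_on hc.2
          (((continuous_id.sub continuous_const).mul hf).intervalIntegrable _ _)
          ((continuous_id.mul hf).intervalIntegrable _ _)
        intro s _
        exact mul_le_mul_of_nonneg_right (by show s - c ≤ s; linarith) (hfpos s)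
      have hsf : Continuous fun s : ℝ => s * f s := continuous_id.mul hf
      have h2 : (∫ s in c..1, s * f s) ≤ ∫ s in (0:ℝ)..1, s * f s := by
        rw [← intervalIntegral.integral_add_adjacent_intervals
          (hsf.intervalIntegrable 0 c)
          (hsf.intervalIntegrable c 1)]
        have h3 : 0 ≤ ∫ s in (0:ℝ)..c, s * f s :=
          intervalIntegral.integral_nonneg hc0 (fun s hs => mul_nonneg hs.1 (hfpos s))
        linarith
      linarith
    have htend : Filter.Tendsto ξ (nhdsWithin V₀ (Ioi V₀)) (nhds (ξ V₀)) :=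
      (hξc.tendsto V₀).mono_left nhdsWithin_le_nhds
    have hev : ∀ᶠ c in nhdsWithin V₀ (Ioi V₀),
        1 - (∫ s in (0:ℝ)..1, s * f s) ≤ ξ c := by
      filter_upwards [Ioc_mem_nhdsGT hV₀lt1] with c hc using key c hc
    have := ge_of_tendsto htend hev
    linarith
end
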